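/- For every integer n ≥ 0, one has the matrix factorization M_n = L_n · U_n over ℚ, where M_n, L_n, U_n are the (n+1)×(n+1) matrices with entries (for 0 ≤ i,j ≤ n): m_{i,j} = C(2j+1, i) − δ_{2j+1,i}; l_{i,j} = C(j, i−j); and u_{i,j} = 1 if i = 0, u_{i,j} = C(2j−i, i−1)·(2j+1)/i if 0 < i < 2j+1, and u_{i,j} = 0 if i ≥ 2j+1. -/

import Mathlib

/-!
Read column `j` of each matrix as the coefficient list of a polynomial in `x`. Column `j` of `M`
is `(1 + x)^(2j+1) - x^(2j+1)` and column `k` of `L` is `y^k` with `y = x(1 + x)`, so column `j`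
of `L U` is `∑ₖ u_{kj} y^k`. For `a = 1 + x`, `b = -x` we have `a + b = 1` and `-ab = y`, hence
the power sums `aᵐ + bᵐ`, which satisfy `s_{m+2} = s_{m+1} + y sₘ`, are the Jacobsthal–Lucas
polynomials `jₘ(y)`. Writing `j_{m+1} = J_{m+2} + y Jₘ` through the Jacobsthal polynomials,
where `J_{m+1}` has coefficients `C(m-k, k)`, the absorption identity
`C(r+1, s+1) + C(r, s) = C(r, s) (r+s+2)/(s+1)` turns the coefficients of `j_{2j+1}` into `u_{kj}`.
-/

open Polynomial Finset

theorem Nat.cast_choose_succ_succ_add_choose {K : Type*} [Field K] [CharZero K] (r s : ℕ) :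
    ((r + 1).choose (s + 1) + r.choose s : K) = r.choose s * (r + s + 2) / (s + 1) := by
  have h : ((r + 1 : ℕ) * r.choose s : K) = (r + 1).choose (s + 1) * (s + 1) := by
    exact_mod_cast Nat.add_one_mul_choose_eq r s
  field_simp
  push_cast at h
  linear_combination -h

namespace Polynomial

variable (R : Type*) [CommSemiring R]

noncomputable def jacobsthal : ℕ → R[X]
  | 0 => 0
  | 1 => 1
  | m + 2 => jacobsthal (m + 1) + X * jacobsthal m

noncomputable def jacobsthalLucas : ℕ → R[X]
  | 0 => 2
  | m + 1 => jacobsthal R (m + 2) + X * jacobsthal R m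

variable {R}

theorem coeff_jacobsthal_succ (m k : ℕ) : (jacobsthal R (m + 1)).coeff k = (m - k).choose k := by
  induction m using Nat.twoStepInduction generalizing k with
  | zero => cases k <;> simp [jacobsthal, coeff_one]
  | one => rcases k with _ | _ | k <;> simp [jacobsthal, coeff_one]
  | more m ih₀ ih₁ =>
    rcases k with _ | k
    · rw [jacobsthal, coeff_add, coeff_X_mul_zero, ih₁]
      simp
    rw [jacobsthal, coeff_add, coeff_X_mul, ih₀, ih₁, ← Nat.cast_add]
    congr 1
    rcases le_or_gt k m with hkm | hmk
    · rw [show m + 1 + 1 - (k + 1) = m - k + 1 by omega, Nat.choose_succ_succ',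
        show m + 1 - (k + 1) = m - k by omega, add_comm]
    · obtain ⟨k, rfl⟩ := Nat.exists_eq_add_of_lt hmk
      simp [show m + 1 + 1 - (m + k + 1 + 1) = 0 by omega, show m - (m + k + 1) = 0 by omega]

theorem jacobsthalLucas_add_two (m : ℕ) :
    jacobsthalLucas R (m + 2) = jacobsthalLucas R (m + 1) + X * jacobsthalLucas R m := by
  rcases m with _ | m <;> simp only [jacobsthalLucas, jacobsthal] <;> ring

theorem coeff_jacobsthalLucas_succ_zero (m : ℕ) : (jacobsthalLucas R (m + 1)).coeff 0 = 1 := by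
  simp [jacobsthalLucas, coeff_jacobsthal_succ]

theorem coeff_jacobsthalLucas_add_two_succ (m k : ℕ) :
    (jacobsthalLucas R (m + 2)).coeff (k + 1) = (m + 1 - k).choose (k + 1) + (m - k).choose k := by
  rw [jacobsthalLucas, coeff_add, coeff_X_mul, coeff_jacobsthal_succ, coeff_jacobsthal_succ]
  congr 3
  omega

theorem natDegree_jacobsthalLucas_le (m : ℕ) : (jacobsthalLucas R m).natDegree ≤ m / 2 := by
  rw [natDegree_le_iff_coeff_eq_zero]
  rintro (_ | k) hk
  · omega
  match m with
  | 0 => simp [jacobsthalLucas, coeff_ofNat_succ]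
  | 1 => simp [jacobsthalLucas, jacobsthal, coeff_one]
  | m + 2 =>
    rw [coeff_jacobsthalLucas_add_two_succ, Nat.choose_eq_zero_of_lt (by omega),
      Nat.choose_eq_zero_of_lt (by omega), Nat.cast_zero, add_zero]

theorem pow_add_pow_eq_aeval_jacobsthalLucas {A : Type*} [CommRing A] [Algebra R A] {a b : A}
    (hab : a + b = 1) (m : ℕ) : a ^ m + b ^ m = aeval (-(a * b)) (jacobsthalLucas R m) := by
  induction m using Nat.twoStepInduction with
  | zero => rw [jacobsthalLucas, map_ofNat, pow_zero, pow_zero, one_add_one_eq_two]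
  | one => simpa [jacobsthalLucas, jacobsthal] using hab
  | more m ih₀ ih₁ =>
    rw [jacobsthalLucas_add_two, map_add, map_mul, aeval_X, ← ih₀, ← ih₁]
    linear_combination (a ^ (m + 1) + b ^ (m + 1)) * hab

theorem coeff_jacobsthalLucas_succ {K : Type*} [Field K] [CharZero K] (m k : ℕ) :
    (jacobsthalLucas K (m + 1)).coeff k =
      if k = 0 then 1 else if k < m + 1 then ((m - k).choose (k - 1) : K) * (m + 1) / k else 0 := by
  rcases k with _ | k
  · simp [coeff_jacobsthalLucas_succ_zero]
  rcases m with _ | m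
  · simp [jacobsthalLucas, jacobsthal, coeff_one]
  rw [coeff_jacobsthalLucas_add_two_succ, if_neg k.succ_ne_zero, Nat.add_sub_cancel]
  split_ifs with hk
  · rw [show m + 1 - k = m - k + 1 by omega, show m + 1 - (k + 1) = m - k by omega,
      Nat.cast_choose_succ_succ_add_choose]
    push_cast [Nat.cast_sub (show k ≤ m by omega)]
    ring
  · rw [Nat.choose_eq_zero_of_lt (by omega), Nat.choose_eq_zero_of_lt (by omega)]
    simp

theorem coeff_X_mul_one_add_X_pow (k i : ℕ) :
    ((X * (1 + X)) ^ k : R[X]).coeff i = if i < k then 0 else (k.choose (i - k) : R) := by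
  rw [mul_pow, coeff_X_pow_mul', coeff_one_add_X_pow]
  split_ifs <;> first | rfl | omega

end Polynomial

theorem binomial_LU_decomposition (n : ℕ)
    (M L U : Matrix (Fin (n + 1)) (Fin (n + 1)) ℚ)
    (hM : ∀ i j : Fin (n + 1),
      M i j = ((2 * (j : ℕ) + 1).choose (i : ℕ) : ℚ) -
        if 2 * (j : ℕ) + 1 = (i : ℕ) then 1 else 0)
    (hL : ∀ i j : Fin (n + 1),
      L i j = if (i : ℕ) < (j : ℕ) then 0 else ((j : ℕ).choose ((i : ℕ) - (j : ℕ)) : ℚ))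
    (hU : ∀ i j : Fin (n + 1),
      U i j = if (i : ℕ) = 0 then 1
        else if (i : ℕ) < 2 * (j : ℕ) + 1 then
          ((2 * (j : ℕ) - (i : ℕ)).choose ((i : ℕ) - 1) : ℚ) * (2 * (j : ℕ) + 1) / (i : ℕ)
        else 0) :
    M = L * U := by
  ext i j
  set P : ℚ[X] := jacobsthalLucas ℚ (2 * j + 1)
  have hcolumn : ((1 + X) ^ (2 * (j : ℕ) + 1) - X ^ (2 * (j : ℕ) + 1) : ℚ[X]) =
      aeval (X * (1 + X)) P := by
    have h := pow_add_pow_eq_aeval_jacobsthalLucas (R := ℚ) (a := (1 + X : ℚ[X])) (b := -X)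
      (add_neg_cancel_right 1 X) (2 * j + 1)
    rwa [Odd.neg_pow ⟨j, rfl⟩, ← sub_eq_add_neg, mul_neg, neg_neg, mul_comm (1 + X)] at h
  have hdeg : P.natDegree < n + 1 := (natDegree_jacobsthalLucas_le _).trans_lt (by omega)
  calc M i j = ((1 + X) ^ (2 * (j : ℕ) + 1) - X ^ (2 * (j : ℕ) + 1) : ℚ[X]).coeff i := by
        rw [hM, coeff_sub, coeff_one_add_X_pow, coeff_X_pow]
        simp only [eq_comm]
    _ = ∑ k ∈ range (n + 1), ((X * (1 + X)) ^ k : ℚ[X]).coeff i * P.coeff k := by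
        rw [hcolumn, aeval_eq_sum_range' hdeg, finsetSum_coeff]
        simp only [coeff_smul, smul_eq_mul, mul_comm]
    _ = (L * U) i j := by
        rw [Matrix.mul_apply, ← Fin.sum_univ_eq_sum_range]
        refine Finset.sum_congr rfl fun k _ => ?_
        rw [hL, hU, coeff_X_mul_one_add_X_pow, coeff_jacobsthalLucas_succ]
        push_cast
        rfl
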